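/- Revenue guarantee of Sort-Cut under rational bidding: suppose every bidder reports her true budget, and every bidder who receives nothing at the clearing Sort-Cut outcome (every i > k) reports a value w_i at least her true value v_i (rational bidding). Let R = x* be the Sort-Cut revenue at the clearing breakpoint and let b_max := max_{1 ≤ i ≤ k} b_i be the maximum budget among the winners. Then R ≥ R* − b_max, where R* is the ascending-price-auction revenue for the true values and budgets. -/

import Mathlib

open Finset

/-- Prefix sum of budgets: `prefixSum b j = b 1 + ⋯ + b j`. -/
noncomputable def prefixSum (b : ℕ → ℝ) (j : ℕ) : ℝ := ∑ i ∈ Finset.Icc 1 j, b i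

open scoped Classical in
/-- The cut index determined by a breakpoint `x`: the largest `k ∈ {1, …, n}` with
`b 1 + ⋯ + b (k-1) ≤ x`. -/
noncomputable def cutIndex (b : ℕ → ℝ) (n : ℕ) (x : ℝ) : ℕ :=
  Nat.findGreatest (fun k => 1 ≤ k ∧ prefixSum b (k - 1) ≤ x) n

/-- `qty w b n x t` is the number of units obtained by spending `t` dollars along the
Sort-Cut price schedule at breakpoint `x`: the first `b'_k = prefixSum b k - x` dollars buy
units at unit price `w k`, the next `b (k+1)` dollars at price `w (k+1)`, and so on through
`w n` (spending is capped at the total money the schedule accommodates).  The cumulative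
money available through segment `j` is `max (prefixSum b j - x) 0`. -/
noncomputable def qty (w b : ℕ → ℝ) (n : ℕ) (x t : ℝ) : ℝ :=
  ∑ j ∈ Finset.Icc 1 n,
    (min t (max (prefixSum b j - x) 0) - min t (max (prefixSum b (j - 1) - x) 0)) / w j

/-- The Sort-Cut demand at breakpoint `x`: each bidder `i < k` demands `qty (b i)`, and
bidder `k` demands `q' (b k - b'_k) = qty (b k) - qty (b'_k)` along the schedule with its
first segment removed. -/
noncomputable def demand (w b : ℕ → ℝ) (n : ℕ) (x : ℝ) : ℝ :=
  (∑ i ∈ Finset.Icc 1 (cutIndex b n x - 1), qty w b n x (b i)) +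
    (qty w b n x (b (cutIndex b n x)) - qty w b n x (prefixSum b (cutIndex b n x) - x))

/-- The quantity allocated to bidder `i` by the Sort-Cut mechanism at breakpoint `x`. -/
noncomputable def alloc (w b : ℕ → ℝ) (n : ℕ) (x : ℝ) (i : ℕ) : ℝ :=
  if i < cutIndex b n x then qty w b n x (b i)
  else if i = cutIndex b n x then
    qty w b n x (b i) - qty w b n x (prefixSum b (cutIndex b n x) - x)
  else 0

/-- The payment charged to bidder `i` by the Sort-Cut mechanism at breakpoint `x`:
bidders below the cut pay their whole budget, bidder `k` pays `b k - b'_k`, the rest pay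
nothing. -/
noncomputable def pay (b : ℕ → ℝ) (n : ℕ) (x : ℝ) (i : ℕ) : ℝ :=
  if i < cutIndex b n x then b i
  else if i = cutIndex b n x then b i - (prefixSum b (cutIndex b n x) - x)
  else 0

/-- A valid reported profile: at least one bidder, a positive supply `m`, positive reported
values and budgets, values sorted in nonincreasing order, and the lowest bidder can buy all
`m` units at her reported value. -/
def ValidProfile (w b : ℕ → ℝ) (n : ℕ) (m : ℝ) : Prop :=
  1 ≤ n ∧ 0 < m ∧
    (∀ i ∈ Finset.Icc 1 n, 0 < w i ∧ 0 < b i) ∧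
    (∀ i ∈ Finset.Icc 1 n, ∀ j ∈ Finset.Icc 1 n, i ≤ j → w j ≤ w i) ∧
    m * w n ≤ b n

/-- `x` is a clearing breakpoint of the Sort-Cut mechanism: demand equals supply. -/
def IsClearing (w b : ℕ → ℝ) (n : ℕ) (m x : ℝ) : Prop :=
  0 ≤ x ∧ x ≤ prefixSum b n ∧ demand w b n x = m

/-- The demand of the ascending price auction with truthful bids at price `p`:
the total budget of the bidders whose value is at least `p`, divided by `p`. -/
noncomputable def DAPA (v b : ℕ → ℝ) (n : ℕ) (p : ℝ) : ℝ :=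
  (∑ i ∈ (Finset.Icc 1 n).filter fun i => p ≤ v i, b i) / p

/-- The market clearing price of the ascending price auction with truthful bids. -/
noncomputable def vstar (v b : ℕ → ℝ) (n : ℕ) (m : ℝ) : ℝ :=
  sInf {p : ℝ | 0 < p ∧ DAPA v b n p ≤ m}

lemma prefixSum_zero (b : ℕ → ℝ) : prefixSum b 0 = 0 := by simp [prefixSum]

lemma prefixSum_succ (b : ℕ → ℝ) (k : ℕ) (hk : 1 ≤ k) :
    prefixSum b k = prefixSum b (k - 1) + b k := by
  obtain ⟨j, rfl⟩ : ∃ j, k = j + 1 := ⟨k - 1, by omega⟩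
  simp [prefixSum, Finset.sum_Icc_succ_top (by omega : 1 ≤ j + 1)]

lemma prefixSum_mono (b : ℕ → ℝ) (n : ℕ) (hb : ∀ l ∈ Finset.Icc 1 n, 0 ≤ b l)
    {i j : ℕ} (hij : i ≤ j) (hjn : j ≤ n) : prefixSum b i ≤ prefixSum b j := by
  have h1 : Finset.Icc 1 i = Finset.Ioc 0 i := Finset.Icc_add_one_left_eq_Ioc 0 i
  have h2 : Finset.Icc 1 j = Finset.Ioc 0 j := Finset.Icc_add_one_left_eq_Ioc 0 j
  have key := Finset.sum_Ioc_consecutive b (Nat.zero_le i) hij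
  have hnn : 0 ≤ ∑ l ∈ Finset.Ioc i j, b l := by
    apply Finset.sum_nonneg
    intro l hl
    rw [Finset.mem_Ioc] at hl
    exact hb l (Finset.mem_Icc.mpr ⟨by omega, by omega⟩)
  simp only [prefixSum, h1, h2]
  linarith

lemma telescope_Icc (g : ℕ → ℝ) (I : ℕ) :
    ∑ j ∈ Finset.Icc 1 I, (g j - g (j - 1)) = g I - g 0 := by
  induction I with
  | zero => simp
  | succ I ih =>
      rw [Finset.sum_Icc_succ_top (by omega : 1 ≤ I + 1), ih]
      simp only [Nat.add_sub_cancel]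
      ring

lemma min_sub_min_mono {s s' c c' : ℝ} (hss : s' ≤ s) (hcc : c ≤ c') :
    min s' c' - min s' c ≤ min s c' - min s c := by
  rcases le_total s c with h1 | h1 <;> rcases le_total s c' with h2 | h2 <;>
    rcases le_total s' c with h3 | h3 <;> rcases le_total s' c' with h4 | h4 <;>
    simp only [min_def] <;> split_ifs <;> linarith

lemma qty_zero (w b : ℕ → ℝ) (n : ℕ) (x : ℝ) : qty w b n x 0 = 0 := by
  apply Finset.sum_eq_zero
  intro j hj
  rw [min_eq_left (le_max_right _ _), min_eq_left (le_max_right _ _)]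
  simp

lemma qty_sub_qty_le (w b : ℕ → ℝ) (n I : ℕ) (x s s' : ℝ)
    (hw : ∀ i ∈ Finset.Icc 1 n, 0 < w i)
    (hb : ∀ i ∈ Finset.Icc 1 n, 0 ≤ b i)
    (hsort : ∀ i ∈ Finset.Icc 1 n, ∀ j ∈ Finset.Icc 1 n, i ≤ j → w j ≤ w i)
    (hI : I ∈ Finset.Icc 1 n) (hx : 0 ≤ x)
    (hs' : 0 ≤ s') (hss : s' ≤ s) (hsC : s ≤ max (prefixSum b I - x) 0) :
    qty w b n x s - qty w b n x s' ≤ (s - s') / w I := by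
  obtain ⟨hI1, hIn⟩ := Finset.mem_Icc.mp hI
  set C : ℕ → ℝ := fun j => max (prefixSum b j - x) 0 with hC
  set g : ℕ → ℝ := fun j => min s (C j) - min s' (C j) with hg
  have hCmono : ∀ a c : ℕ, a ≤ c → c ≤ n → C a ≤ C c := by
    intro a c hac hcn
    exact max_le_max (by linarith [prefixSum_mono b n hb hac hcn]) le_rfl
  have step1 : qty w b n x s - qty w b n x s' =
      ∑ j ∈ Finset.Icc 1 n, (g j - g (j - 1)) / w j := by
    rw [qty, qty, ← Finset.sum_sub_distrib]
    refine Finset.sum_congr rfl ?_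
    intro j hj
    rw [div_sub_div_same]
    congr 1
    simp only [hg, hC]
    ring
  have key : ∀ j ∈ Finset.Icc 1 n, (g j - g (j - 1)) / w j ≤
      (if j ≤ I then (g j - g (j - 1)) / w I else 0) := by
    intro j hj
    obtain ⟨hj1, hjn⟩ := Finset.mem_Icc.mp hj
    split_ifs with h
    · have hgmono : g (j - 1) ≤ g j := by
        have h5 := min_sub_min_mono hss (hCmono (j - 1) j (by omega) hjn)
        simp only [hg]
        linarith
      exact div_le_div_of_nonneg_left (by linarith) (hw I hI) (hsort j hj I hI (by omega))
    · have hsj : ∀ c : ℕ, I ≤ c → c ≤ n → g c = s - s' := by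
        intro c hIc hcn
        have hCc : s ≤ C c := le_trans hsC (hCmono I c hIc hcn)
        simp [hg, min_eq_left hCc, min_eq_left (le_trans hss hCc)]
      rw [hsj j (by omega) hjn, hsj (j - 1) (by omega) (by omega)]
      simp
  have step2 : ∑ j ∈ Finset.Icc 1 n, (g j - g (j - 1)) / w j ≤
      ∑ j ∈ Finset.Icc 1 n, (if j ≤ I then (g j - g (j - 1)) / w I else 0) :=
    Finset.sum_le_sum key
  have step3 : ∑ j ∈ Finset.Icc 1 n, (if j ≤ I then (g j - g (j - 1)) / w I else 0) =
      ∑ j ∈ Finset.Icc 1 I, (g j - g (j - 1)) / w I := by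
    rw [← Finset.sum_filter]
    congr 1
    ext j
    simp only [Finset.mem_filter, Finset.mem_Icc]
    omega
  have step4 : ∑ j ∈ Finset.Icc 1 I, (g j - g (j - 1)) / w I = (g I - g 0) / w I := by
    rw [← Finset.sum_div, telescope_Icc]
  have hgI : g I = s - s' := by
    have hCI : s ≤ C I := hsC
    simp [hg, min_eq_left hCI, min_eq_left (le_trans hss hCI)]
  have hg0 : g 0 = 0 := by
    have : C 0 = 0 := by
      simp only [hC, prefixSum_zero, zero_sub]
      exact max_eq_right (by linarith)
    simp [hg, this, min_eq_right hs', min_eq_right (le_trans hs' hss)]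
  rw [step1]
  calc ∑ j ∈ Finset.Icc 1 n, (g j - g (j - 1)) / w j
      ≤ ∑ j ∈ Finset.Icc 1 n, (if j ≤ I then (g j - g (j - 1)) / w I else 0) := step2
    _ = (g I - g 0) / w I := by rw [step3, step4]
    _ = (s - s') / w I := by rw [hgI, hg0]; ring_nf

open scoped Classical in
lemma cutIndex_spec (b : ℕ → ℝ) (n : ℕ) (x : ℝ) (hk : 1 ≤ cutIndex b n x)
    (hxn : x ≤ prefixSum b n) :
    cutIndex b n x ≤ n ∧ prefixSum b (cutIndex b n x - 1) ≤ x ∧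
      x ≤ prefixSum b (cutIndex b n x) := by
  have h := Nat.findGreatest_eq_iff
    (P := fun k => 1 ≤ k ∧ prefixSum b (k - 1) ≤ x) (k := n)
    (m := cutIndex b n x) |>.mp rfl
  obtain ⟨hkn, hspec, hgr⟩ := h
  have hPk : prefixSum b (cutIndex b n x - 1) ≤ x := (hspec (by omega)).2
  refine ⟨hkn, hPk, ?_⟩
  by_cases heq : cutIndex b n x = n
  · rw [heq]; exact hxn
  · by_contra hcon
    push_neg at hcon
    exact hgr (n := cutIndex b n x + 1) (by omega) (by omega)
      ⟨by omega, by simpa using hcon.le⟩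

lemma crux (w b : ℕ → ℝ) (n : ℕ) (m x : ℝ) (hV : ValidProfile w b n m)
    (hx : IsClearing w b n m x) (hk : 1 ≤ cutIndex b n x)
    (I : ℕ) (hI : I ∈ Finset.Icc 1 n) (hkI : cutIndex b n x ≤ I)
    (hbig : ∀ j ∈ Finset.Icc 1 (cutIndex b n x), b j ≤ prefixSum b I - x) :
    m * w I ≤ x := by
  obtain ⟨hn, hm, hpos, hsort, hlast⟩ := hV
  obtain ⟨hx0, hxn, hD⟩ := hx
  set k := cutIndex b n x with hkdef
  obtain ⟨hkn, hPk, hxk⟩ := cutIndex_spec b n x hk hxn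
  have hw : ∀ i ∈ Finset.Icc 1 n, 0 < w i := fun i hi => (hpos i hi).1
  have hb0 : ∀ i ∈ Finset.Icc 1 n, 0 ≤ b i := fun i hi => (hpos i hi).2.le
  have hkmem : k ∈ Finset.Icc 1 n := Finset.mem_Icc.mpr ⟨hk, hkn⟩
  have hps : prefixSum b k = prefixSum b (k - 1) + b k := prefixSum_succ b k hk
  -- winners' demand bound
  have hwin : ∀ i ∈ Finset.Icc 1 (k - 1), qty w b n x (b i) ≤ b i / w I := by
    intro i hi
    obtain ⟨hi1, hik⟩ := Finset.mem_Icc.mp hi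
    have hi' : i ∈ Finset.Icc 1 n := Finset.mem_Icc.mpr ⟨hi1, by omega⟩
    have hbd := qty_sub_qty_le w b n I x (b i) 0 hw hb0 hsort hI hx0 le_rfl
      (hpos i hi').2.le
      (le_trans (hbig i (Finset.mem_Icc.mpr ⟨hi1, by omega⟩)) (le_max_left _ _))
    rw [qty_zero] at hbd
    simpa using hbd
  -- bidder k's demand bound
  have hkbd : qty w b n x (b k) - qty w b n x (prefixSum b k - x) ≤
      (b k - (prefixSum b k - x)) / w I :=
    qty_sub_qty_le w b n I x (b k) (prefixSum b k - x) hw hb0 hsort hI hx0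
      (by linarith) (by linarith)
      (le_trans (hbig k (Finset.mem_Icc.mpr ⟨hk, le_rfl⟩)) (le_max_left _ _))
  have hsum : m ≤ x / w I := by
    have h1 : m = demand w b n x := hD.symm
    rw [h1, demand]
    have h2 : ∑ i ∈ Finset.Icc 1 (k - 1), qty w b n x (b i) ≤
        ∑ i ∈ Finset.Icc 1 (k - 1), b i / w I := Finset.sum_le_sum hwin
    rw [← Finset.sum_div] at h2
    have h3 : (∑ i ∈ Finset.Icc 1 (k - 1), b i) = prefixSum b (k - 1) := rfl
    rw [h3] at h2
    have : prefixSum b (k - 1) / w I + (b k - (prefixSum b k - x)) / w I = x / w I := by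
      rw [← add_div]
      congr 1
      linarith
    calc (∑ i ∈ Finset.Icc 1 (k - 1), qty w b n x (b i)) +
        (qty w b n x (b k) - qty w b n x (prefixSum b k - x))
        ≤ prefixSum b (k - 1) / w I + (b k - (prefixSum b k - x)) / w I := by
          exact add_le_add h2 hkbd
      _ = x / w I := this
  exact (le_div_iff₀ (hw I hI)).mp hsum

/-- revenue guarantee of Sort-Cut under rational bidding.  If every
bidder reports her true budget and every loser reports at least her true value, the
Sort-Cut revenue `x` at a clearing breakpoint is at least `R* - b_max`, where `b_max` is
the maximum budget among the winners and `R* = v* · m` is the ascending-price-auction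
revenue for the true values and budgets. -/
theorem sortcut_revenue_guarantee
    (n : ℕ) (m : ℝ) (w b v : ℕ → ℝ)
    (hV : ValidProfile w b n m)
    (hvpos : ∀ i ∈ Finset.Icc 1 n, 0 < v i)
    (hvdummy : m * v n ≤ b n)
    (x : ℝ) (hx : IsClearing w b n m x)
    (hk : 1 ≤ cutIndex b n x)
    (hrational : ∀ i ∈ Finset.Icc 1 n, cutIndex b n x < i → v i ≤ w i) :
    vstar v b n m * m -
        (Finset.Icc 1 (cutIndex b n x)).sup' (Finset.nonempty_Icc.mpr hk) b
      ≤ x := by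
  obtain ⟨hn, hm, hpos, hsort, hlast⟩ := hV
  obtain ⟨hx0, hxn, hD⟩ := hx
  set k := cutIndex b n x with hkdef
  set bmax := (Finset.Icc 1 k).sup' (Finset.nonempty_Icc.mpr hk) b with hbm
  obtain ⟨hkn, hPk, hxk⟩ := cutIndex_spec b n x hk hxn
  have hw : ∀ i ∈ Finset.Icc 1 n, 0 < w i := fun i hi => (hpos i hi).1
  have hb0 : ∀ i ∈ Finset.Icc 1 n, 0 ≤ b i := fun i hi => (hpos i hi).2.le
  have hkmem : k ∈ Finset.Icc 1 n := Finset.mem_Icc.mpr ⟨hk, hkn⟩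
  have hbk : 0 < b k := (hpos k hkmem).2
  have hbmax : b k ≤ bmax := Finset.le_sup' b (Finset.mem_Icc.mpr ⟨hk, le_rfl⟩)
  have hbmax0 : 0 < bmax := lt_of_lt_of_le hbk hbmax
  have hps : prefixSum b k = prefixSum b (k - 1) + b k := prefixSum_succ b k hk
  set p₀ := (x + bmax) / m with hp₀
  have hp₀pos : 0 < p₀ := div_pos (by linarith) hm
  -- every p > p₀ clears the APA
  have hclaim : ∀ p : ℝ, p₀ < p → (∑ i ∈ (Finset.Icc 1 n).filter (fun i => p ≤ v i), b i)
      ≤ m * p := by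
    intro p hp
    have hppos : 0 < p := lt_trans hp₀pos hp
    have hpm : x + bmax < p * m := by
      rw [hp₀, div_lt_iff₀ hm] at hp
      linarith
    set F := (Finset.Icc 1 n).filter (fun i => p ≤ v i) with hF
    by_cases hex : ∃ i ∈ F, k < i
    · obtain ⟨i₀, hi₀F, hi₀k⟩ := hex
      have hFne : F.Nonempty := ⟨i₀, hi₀F⟩
      set I := F.max' hFne with hImax
      have hIF : I ∈ F := Finset.max'_mem F hFne
      obtain ⟨hIicc, hIv⟩ := Finset.mem_filter.mp hIF
      have hkI : k < I := lt_of_lt_of_le hi₀k (Finset.le_max' F i₀ hi₀F)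
      have hwI : p ≤ w I := le_trans hIv (hrational I hIicc hkI)
      have hFsub : F ⊆ Finset.Icc 1 I := by
        intro i hi
        obtain ⟨hiicc, _⟩ := Finset.mem_filter.mp hi
        exact Finset.mem_Icc.mpr ⟨(Finset.mem_Icc.mp hiicc).1, Finset.le_max' F i hi⟩
      have hFle : (∑ i ∈ F, b i) ≤ prefixSum b I := by
        refine Finset.sum_le_sum_of_subset_of_nonneg hFsub ?_
        intro i hi _
        exact hb0 i (Finset.mem_Icc.mpr ⟨(Finset.mem_Icc.mp hi).1,
          le_trans (Finset.mem_Icc.mp hi).2 (Finset.mem_Icc.mp hIicc).2⟩)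
      rcases le_or_gt bmax (prefixSum b I - x) with hc | hc
      · have hcrux : m * w I ≤ x := by
          refine crux w b n m x ⟨hn, hm, hpos, hsort, hlast⟩ ⟨hx0, hxn, hD⟩ hk I hIicc
            hkI.le ?_
          intro j hj
          exact le_trans (Finset.le_sup' b hj) hc
        have : m * p ≤ m * w I := mul_le_mul_of_nonneg_left hwI hm.le
        nlinarith
      · nlinarith
    · push_neg at hex
      have hFsub : F ⊆ Finset.Icc 1 k := by
        intro i hi
        obtain ⟨hiicc, _⟩ := Finset.mem_filter.mp hi
        exact Finset.mem_Icc.mpr ⟨(Finset.mem_Icc.mp hiicc).1, hex i hi⟩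
      have hFle : (∑ i ∈ F, b i) ≤ prefixSum b k := by
        refine Finset.sum_le_sum_of_subset_of_nonneg hFsub ?_
        intro i hi _
        exact hb0 i (Finset.mem_Icc.mpr ⟨(Finset.mem_Icc.mp hi).1,
          le_trans (Finset.mem_Icc.mp hi).2 hkn⟩)
      nlinarith
  -- hence vstar ≤ p₀
  have hsub : Set.Ioi p₀ ⊆ {p : ℝ | 0 < p ∧ DAPA v b n p ≤ m} := by
    intro p hp
    have hp' : p₀ < p := hp
    have hppos : 0 < p := lt_trans hp₀pos hp'
    refine ⟨hppos, ?_⟩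
    rw [DAPA, div_le_iff₀ hppos]
    exact hclaim p hp'
  have hvle : vstar v b n m ≤ p₀ := by
    have h1 : sInf {p : ℝ | 0 < p ∧ DAPA v b n p ≤ m} ≤ sInf (Set.Ioi p₀) :=
      csInf_le_csInf ⟨0, fun q hq => hq.1.le⟩ Set.nonempty_Ioi hsub
    rw [csInf_Ioi] at h1
    exact h1
  have h2 : vstar v b n m * m ≤ p₀ * m := mul_le_mul_of_nonneg_right hvle hm.le
  rw [hp₀, div_mul_cancel₀ _ hm.ne'] at h2
  linarith
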